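/- arXiv:2506.02410 — 2 statements merged into one kernel-verified Lean document; each statement's English description precedes it below -/
import Mathlib

section
/- Let X and X̃ be n×d real matrices that differ only in their first rows x₁ and x̃₁, with the remaining rows Y identical. Then the ℓ₁-distance between the ordered eigenvalue vectors of (1/n)XᵀX and (1/n)X̃ᵀX̃ is at most (1/n)x₁ᵀx₁ + (1/n)x̃₁ᵀx̃₁. -/
/-!
Both Gram matrices are the common matrix `B = (1/n) YᵀY` plus a positive semidefinite rank-one
term `(1/n) x xᵀ`. By Weyl monotonicity each ordered eigenvalue of either matrix dominates the
corresponding ordered eigenvalue `β_k` of `B`, so `|λ_k - λ̃_k| ≤ (λ_k - β_k) + (λ̃_k - β_k)`, a sum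
of nonnegative terms. Summing over `k` turns the right side into the difference of traces, which is
the trace `(1/n) xᵀx` of each rank-one term.

Weyl monotonicity is proved in Courant–Fischer style: among the vectors orthogonal to the
eigenvectors of `B` below position `k` and to those of `A` above it there is a nonzero `x`, by
counting dimensions, and on it `β_k |x|² ≤ xᵀBx ≤ xᵀAx ≤ λ_k |x|²`.
-/

open Matrix

/-- Eigenvalues of a Hermitian matrix sorted in decreasing order. -/
noncomputable def sortedEigs {d : ℕ} {A : Matrix (Fin d) (Fin d) ℝ}
    (hA : A.IsHermitian) : Fin d → ℝ :=
  fun i => hA.eigenvalues (Tuple.sort hA.eigenvalues i.rev)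

theorem sum_abs_sub_le_of_le {ι : Type*} [Fintype ι] {a b c : ι → ℝ} (ha : c ≤ a) (hb : c ≤ b) :
    ∑ i, |a i - b i| ≤ (∑ i, a i - ∑ i, c i) + (∑ i, b i - ∑ i, c i) := by
  rw [← Finset.sum_sub_distrib, ← Finset.sum_sub_distrib, ← Finset.sum_add_distrib]
  exact Finset.sum_le_sum fun i _ => abs_sub_le_iff.mpr ⟨by linarith [hb i], by linarith [ha i]⟩

section MonotoneWeights

variable {ι : Type*} [Fintype ι] [LinearOrder ι] {μ w : ι → ℝ}

theorem mul_sum_le_sum_mul_of_monotone (hμ : Monotone μ) (hw : 0 ≤ w) {r : ι}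
    (hr : ∀ j < r, w j = 0) : μ r * ∑ j, w j ≤ ∑ j, μ j * w j := by
  rw [Finset.mul_sum]
  refine Finset.sum_le_sum fun j _ => ?_
  rcases le_or_gt r j with hj | hj
  · exact mul_le_mul_of_nonneg_right (hμ hj) (hw j)
  · simp [hr j hj]

theorem sum_mul_le_mul_sum_of_monotone (hμ : Monotone μ) (hw : 0 ≤ w) {r : ι}
    (hr : ∀ j > r, w j = 0) : ∑ j, μ j * w j ≤ μ r * ∑ j, w j := by
  rw [Finset.mul_sum]
  refine Finset.sum_le_sum fun j _ => ?_
  rcases le_or_gt j r with hj | hj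
  · exact mul_le_mul_of_nonneg_right (hμ hj) (hw j)
  · simp [hr j hj]

end MonotoneWeights

theorem exists_ne_zero_forall_dotProduct_eq_zero {K ι n : Type*} [Field K] [Fintype ι]
    [Fintype n] (v : ι → n → K) (h : Fintype.card ι < Fintype.card n) :
    ∃ x ≠ 0, ∀ i, v i ⬝ᵥ x = 0 := by
  have hker : LinearMap.ker (Matrix.of v).mulVecLin ≠ ⊥ :=
    LinearMap.ker_ne_bot_of_finrank_lt (by simpa using h)
  obtain ⟨x, hx, hx0⟩ := Submodule.exists_mem_ne_zero_of_ne_bot hker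
  exact ⟨x, hx0, fun i => congrFun (LinearMap.mem_ker.mp hx) i⟩

theorem Matrix.transpose_mul_self_eq_add_vecMulVec {m : ℕ} {n R : Type*} [CommSemiring R]
    {X : Matrix (Fin (m + 1)) n R} {Y : Matrix (Fin m) n R} {x : n → R}
    (h0 : X 0 = x) (hs : ∀ i, X i.succ = Y i) :
    Xᵀ * X = Yᵀ * Y + vecMulVec x x := by
  ext j l
  simp only [mul_apply, transpose_apply, add_apply, vecMulVec_apply, Fin.sum_univ_succ, h0, hs]
  ring

namespace Matrix.IsHermitian

section EigenCoords

variable {n : Type*} [Fintype n] [DecidableEq n] {A : Matrix n n ℝ} (hA : A.IsHermitian)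

noncomputable def eigenCoords (x : n → ℝ) : n → ℝ :=
  star (hA.eigenvectorUnitary : Matrix n n ℝ) *ᵥ x

lemma eigenvectorUnitary_mulVec_eigenCoords (x : n → ℝ) :
    (hA.eigenvectorUnitary : Matrix n n ℝ) *ᵥ hA.eigenCoords x = x := by
  simp [eigenCoords, mulVec_mulVec]

lemma dotProduct_eigenvectorUnitary_mulVec (x v : n → ℝ) :
    x ⬝ᵥ ((hA.eigenvectorUnitary : Matrix n n ℝ) *ᵥ v) = hA.eigenCoords x ⬝ᵥ v := by
  rw [dotProduct_mulVec, eigenCoords, star_eq_conjTranspose, conjTranspose_eq_transpose_of_trivial,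
    ← vecMul_transpose, transpose_transpose]

theorem dotProduct_self_eq_sum_eigenCoords_sq (x : n → ℝ) :
    x ⬝ᵥ x = ∑ i, hA.eigenCoords x i ^ 2 := by
  conv_lhs => arg 2; rw [← hA.eigenvectorUnitary_mulVec_eigenCoords x]
  rw [dotProduct_eigenvectorUnitary_mulVec]
  simp only [dotProduct, sq]

theorem dotProduct_mulVec_eq_sum_eigenvalues_mul_eigenCoords_sq (x : n → ℝ) :
    x ⬝ᵥ (A *ᵥ x) = ∑ i, hA.eigenvalues i * hA.eigenCoords x i ^ 2 := by
  have hAU : A *ᵥ x =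
      (hA.eigenvectorUnitary : Matrix n n ℝ) *ᵥ (diagonal hA.eigenvalues *ᵥ hA.eigenCoords x) := by
    conv_lhs => rw [hA.spectral_theorem]
    simp [eigenCoords, mulVec_mulVec, Matrix.mul_assoc]
  rw [hAU, dotProduct_eigenvectorUnitary_mulVec]
  simp only [dotProduct, mulVec_diagonal]
  exact Finset.sum_congr rfl fun i _ => by ring

end EigenCoords

variable {d : ℕ} {A A' B : Matrix (Fin d) (Fin d) ℝ} {c : ℝ} {v v' : Fin d → ℝ}

theorem sortedEigs_mul_dotProduct_self_le (hA : A.IsHermitian) {k : Fin d} {x : Fin d → ℝ}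
    (hx : ∀ j < k.rev, hA.eigenCoords x (Tuple.sort hA.eigenvalues j) = 0) :
    sortedEigs hA k * (x ⬝ᵥ x) ≤ x ⬝ᵥ (A *ᵥ x) := by
  rw [hA.dotProduct_self_eq_sum_eigenCoords_sq,
    hA.dotProduct_mulVec_eq_sum_eigenvalues_mul_eigenCoords_sq,
    ← Equiv.sum_comp (Tuple.sort hA.eigenvalues) (fun i => hA.eigenCoords x i ^ 2),
    ← Equiv.sum_comp (Tuple.sort hA.eigenvalues)
      (fun i => hA.eigenvalues i * hA.eigenCoords x i ^ 2)]
  exact mul_sum_le_sum_mul_of_monotone (Tuple.monotone_sort hA.eigenvalues) (fun _ => sq_nonneg _)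
    fun j hj => by simp [hx j hj]

theorem dotProduct_mulVec_le_sortedEigs_mul (hA : A.IsHermitian) {k : Fin d} {x : Fin d → ℝ}
    (hx : ∀ j > k.rev, hA.eigenCoords x (Tuple.sort hA.eigenvalues j) = 0) :
    x ⬝ᵥ (A *ᵥ x) ≤ sortedEigs hA k * (x ⬝ᵥ x) := by
  rw [hA.dotProduct_self_eq_sum_eigenCoords_sq,
    hA.dotProduct_mulVec_eq_sum_eigenvalues_mul_eigenCoords_sq,
    ← Equiv.sum_comp (Tuple.sort hA.eigenvalues) (fun i => hA.eigenCoords x i ^ 2),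
    ← Equiv.sum_comp (Tuple.sort hA.eigenvalues)
      (fun i => hA.eigenvalues i * hA.eigenCoords x i ^ 2)]
  exact sum_mul_le_mul_sum_of_monotone (Tuple.monotone_sort hA.eigenvalues) (fun _ => sq_nonneg _)
    fun j hj => by simp [hx j hj]

theorem sortedEigs_le_of_posSemidef_sub (hA : A.IsHermitian) (hB : B.IsHermitian)
    (hAB : (A - B).PosSemidef) : sortedEigs hB ≤ sortedEigs hA := by
  intro k
  obtain ⟨x, hx0, hx⟩ := exists_ne_zero_forall_dotProduct_eq_zero
    (ι := Finset.Iio k.rev ⊕ Finset.Ioi k.rev) (n := Fin d)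
    (Sum.elim (fun j : Finset.Iio k.rev => star (hB.eigenvectorUnitary : Matrix _ _ ℝ)
        (Tuple.sort hB.eigenvalues j))
      (fun j : Finset.Ioi k.rev => star (hA.eigenvectorUnitary : Matrix _ _ ℝ)
        (Tuple.sort hA.eigenvalues j)))
    (by simp only [Fintype.card_sum, Fintype.card_coe, Fin.card_Iio, Fin.card_Ioi,
      Fintype.card_fin]; omega)
  -- `eigenCoords x i` is definitionally `star U i ⬝ᵥ x`, so `hx` gives the vanishing coordinates.
  have hB_le : sortedEigs hB k * (x ⬝ᵥ x) ≤ x ⬝ᵥ (B *ᵥ x) :=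
    hB.sortedEigs_mul_dotProduct_self_le fun j hj => hx (.inl ⟨j, Finset.mem_Iio.mpr hj⟩)
  have hA_le : x ⬝ᵥ (A *ᵥ x) ≤ sortedEigs hA k * (x ⬝ᵥ x) :=
    hA.dotProduct_mulVec_le_sortedEigs_mul fun j hj => hx (.inr ⟨j, Finset.mem_Ioi.mpr hj⟩)
  have hBA : x ⬝ᵥ (B *ᵥ x) ≤ x ⬝ᵥ (A *ᵥ x) := by
    simpa only [star_trivial, sub_mulVec, dotProduct_sub, sub_nonneg] using
      hAB.dotProduct_mulVec_nonneg x
  have hx_pos : 0 < x ⬝ᵥ x := by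
    simpa using dotProduct_star_self_pos_iff.mpr hx0
  exact le_of_mul_le_mul_right (hB_le.trans (hBA.trans hA_le)) hx_pos

theorem sum_sortedEigs (hA : A.IsHermitian) : ∑ k, sortedEigs hA k = A.trace := by
  rw [hA.trace_eq_sum_eigenvalues]
  exact Equiv.sum_comp (Fin.revPerm.trans (Tuple.sort hA.eigenvalues)) hA.eigenvalues

theorem sortedEigs_le_of_eq_add_smul_vecMulVec (hA : A.IsHermitian) (hB : B.IsHermitian)
    (hc : 0 ≤ c) (h : A = B + c • vecMulVec v v) : sortedEigs hB ≤ sortedEigs hA :=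
  hA.sortedEigs_le_of_posSemidef_sub hB <| by
    rw [h, add_sub_cancel_left]
    simpa using (posSemidef_vecMulVec_self_star v).smul hc

theorem sum_sortedEigs_of_eq_add_smul_vecMulVec (hA : A.IsHermitian) (hB : B.IsHermitian)
    (h : A = B + c • vecMulVec v v) :
    ∑ k, sortedEigs hA k = ∑ k, sortedEigs hB k + c * (v ⬝ᵥ v) := by
  rw [hA.sum_sortedEigs, hB.sum_sortedEigs, h, trace_add, trace_smul, trace_vecMulVec,
    smul_eq_mul]

theorem sum_abs_sub_sortedEigs_le_of_eq_add_smul_vecMulVec (hA : A.IsHermitian)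
    (hA' : A'.IsHermitian) (hB : B.IsHermitian) (hc : 0 ≤ c)
    (h : A = B + c • vecMulVec v v) (h' : A' = B + c • vecMulVec v' v') :
    ∑ k, |sortedEigs hA k - sortedEigs hA' k| ≤ c * (v ⬝ᵥ v) + c * (v' ⬝ᵥ v') := by
  have key := sum_abs_sub_le_of_le (hA.sortedEigs_le_of_eq_add_smul_vecMulVec hB hc h)
    (hA'.sortedEigs_le_of_eq_add_smul_vecMulVec hB hc h')
  rwa [hA.sum_sortedEigs_of_eq_add_smul_vecMulVec hB h,
    hA'.sum_sortedEigs_of_eq_add_smul_vecMulVec hB h', add_sub_cancel_left,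
    add_sub_cancel_left] at key

end Matrix.IsHermitian

/-- If X and X̃ differ only in their first rows, the ℓ₁-distance between the ordered
eigenvalue vectors of (1/n)XᵀX and (1/n)X̃ᵀX̃ is at most (1/n)x₁ᵀx₁ + (1/n)x̃₁ᵀx̃₁. -/
theorem stmt1 {m d : ℕ}
    (X Xt : Matrix (Fin (m + 1)) (Fin d) ℝ) (Y : Matrix (Fin m) (Fin d) ℝ)
    (x₁ xt₁ : Fin d → ℝ)
    (h0 : X 0 = x₁) (h0' : Xt 0 = xt₁)
    (hs : ∀ i : Fin m, X i.succ = Y i) (hs' : ∀ i : Fin m, Xt i.succ = Y i)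
    (hX : ((1 / ((m : ℝ) + 1)) • (Xᵀ * X)).IsHermitian)
    (hXt : ((1 / ((m : ℝ) + 1)) • (Xtᵀ * Xt)).IsHermitian) :
    ∑ j, |sortedEigs hX j - sortedEigs hXt j| ≤
      (1 / ((m : ℝ) + 1)) * (∑ i, x₁ i * x₁ i)
        + (1 / ((m : ℝ) + 1)) * (∑ i, xt₁ i * xt₁ i) := by
  have hY : ((1 / ((m : ℝ) + 1)) • (Yᵀ * Y)).IsHermitian := by
    rw [← conjTranspose_eq_transpose_of_trivial]
    exact (isHermitian_conjTranspose_mul_self Y).smul (IsSelfAdjoint.all _)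
  exact hX.sum_abs_sub_sortedEigs_le_of_eq_add_smul_vecMulVec hXt hY (by positivity)
    (by rw [transpose_mul_self_eq_add_vecMulVec h0 hs, smul_add])
    (by rw [transpose_mul_self_eq_add_vecMulVec h0' hs', smul_add])
end

section
/- Let f : ℝ^{n×d} → ℝ^s have ℓ₁-sensitivity Δ₁f = sup over neighboring datasets of ‖f(X) - f(X̃)‖₁ < ∞. The Laplace mechanism M(X) = f(X) + (ℓ₁,…,ℓ_s), where the ℓᵢ are i.i.d. centered Laplace with scale Δ₁f/ε, is ε-differentially private. -/
/-! With `b = Δ / ε`, the output law of the mechanism on dataset `X` has density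
`y ↦ ∏ i, p (y i - f X i)` with respect to Lebesgue measure, where `p` is the Laplace density of
scale `b`. The triangle inequality gives `p u ≤ exp (|u - v| / b) * p v`, so the two output
densities for neighbouring datasets differ pointwise by a factor at most
`exp (‖f X - f Xt‖₁ / b) ≤ exp ε`, and integrating over `S` gives the claim. -/

open MeasureTheory

/-- Two datasets are neighboring if they differ in exactly one row. -/
def Neighboring {n d : ℕ} (X Xt : Fin n → Fin d → ℝ) : Prop :=
  ∃ i, X i ≠ Xt i ∧ ∀ j, j ≠ i → X j = Xt j

/-- The centered Laplace distribution with scale b, with density (1/(2b)) e^{-|x|/b}. -/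
noncomputable def laplaceMeasure (b : ℝ) : Measure ℝ :=
  volume.withDensity fun x => ENNReal.ofReal ((1 / (2 * b)) * Real.exp (-|x| / b))

open Finset
open scoped ENNReal

namespace MeasureTheory

theorem lintegral_fin_prod_eq_prod {m : ℕ} {E : Fin m → Type*} [∀ i, MeasurableSpace (E i)]
    (μ : ∀ i, Measure (E i)) [∀ i, SigmaFinite (μ i)] {g : ∀ i, E i → ℝ≥0∞}
    (hg : ∀ i, Measurable (g i)) :
    ∫⁻ x, ∏ i, g i (x i) ∂Measure.pi μ = ∏ i, ∫⁻ y, g i y ∂μ i := by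
  induction m with
  | zero => simp
  | succ m ih =>
    have htail : Measurable fun x : ∀ i : Fin m, E (Fin.succAbove 0 i) =>
        ∏ i, g (Fin.succAbove 0 i) (x i) :=
      Finset.measurable_prod _ fun i _ => (hg _).comp (measurable_pi_apply i)
    calc ∫⁻ x, ∏ i, g i (x i) ∂Measure.pi μ
        = ∫⁻ x, g 0 x.1 * ∏ i, g (Fin.succAbove 0 i) (x.2 i)
            ∂(μ 0).prod (Measure.pi fun i => μ (Fin.succAbove 0 i)) := by
          rw [← (measurePreserving_piFinSuccAbove μ 0).lintegral_comp_emb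
            (MeasurableEquiv.measurableEmbedding _)]
          exact lintegral_congr fun x => Fin.prod_univ_succAbove (fun i => g i (x i)) 0
      _ = (∫⁻ y, g 0 y ∂μ 0) * ∏ i, ∫⁻ y, g (Fin.succAbove 0 i) y ∂μ (Fin.succAbove 0 i) := by
          rw [lintegral_prod_mul (hg 0).aemeasurable htail.aemeasurable, ih _ fun i => hg _]
      _ = ∏ i, ∫⁻ y, g i y ∂μ i := (Fin.prod_univ_succAbove (fun i => ∫⁻ y, g i y ∂μ i) 0).symm

theorem lintegral_fintype_prod_eq_prod {ι : Type*} [Fintype ι] {E : ι → Type*}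
    [∀ i, MeasurableSpace (E i)] (μ : ∀ i, Measure (E i)) [∀ i, SigmaFinite (μ i)]
    {g : ∀ i, E i → ℝ≥0∞} (hg : ∀ i, Measurable (g i)) :
    ∫⁻ x, ∏ i, g i (x i) ∂Measure.pi μ = ∏ i, ∫⁻ y, g i y ∂μ i := by
  let e := (Fintype.equivFin ι).symm
  rw [← (measurePreserving_piCongrLeft μ e).lintegral_comp_emb
    (MeasurableEquiv.measurableEmbedding _)]
  simp_rw [← e.prod_comp, MeasurableEquiv.coe_piCongrLeft, Equiv.piCongrLeft_apply_apply]
  exact lintegral_fin_prod_eq_prod _ fun i => hg _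

theorem Measure.pi_withDensity {ι : Type*} [Fintype ι] {E : ι → Type*}
    [∀ i, MeasurableSpace (E i)] (μ : ∀ i, Measure (E i)) [∀ i, SigmaFinite (μ i)]
    {g : ∀ i, E i → ℝ≥0∞} (hg : ∀ i, Measurable (g i))
    [∀ i, SigmaFinite ((μ i).withDensity (g i))] :
    Measure.pi (fun i => (μ i).withDensity (g i)) =
      (Measure.pi μ).withDensity fun x => ∏ i, g i (x i) := by
  refine Measure.pi_eq (μ := fun i => (μ i).withDensity (g i)) fun t ht => ?_
  have hbox : (Set.univ.pi t).indicator (fun x => ∏ i, g i (x i)) =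
      fun x => ∏ i, (t i).indicator (g i) (x i) := by
    ext x
    classical
    simp only [Set.indicator_apply, Set.mem_pi, Set.mem_univ, forall_const, prod_ite_zero,
      mem_univ]
  rw [withDensity_apply _ (.univ_pi ht), ← lintegral_indicator (.univ_pi ht), hbox,
    lintegral_fintype_prod_eq_prod μ fun i => (hg i).indicator (ht i)]
  simp only [lintegral_indicator (ht _), withDensity_apply _ (ht _)]

theorem Measure.map_add_left_withDensity {G : Type*} [MeasurableSpace G] [AddGroup G]
    [MeasurableAdd G] (μ : Measure G) [μ.IsAddLeftInvariant] (g : G → ℝ≥0∞) (a : G) :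
    (μ.withDensity g).map (a + ·) = μ.withDensity fun y => g (-a + y) := by
  ext S hS
  rw [Measure.map_apply (measurable_const_add a) hS, withDensity_apply _ hS,
    withDensity_apply _ (measurable_const_add a hS),
    ← (measurePreserving_add_left μ a).setLIntegral_comp_preimage_emb
      (measurableEmbedding_addLeft a) (fun y => g (-a + y)) S]
  simp only [neg_add_cancel_left]

end MeasureTheory

noncomputable def laplacePDF (b x : ℝ) : ℝ≥0∞ :=
  ENNReal.ofReal ((1 / (2 * b)) * Real.exp (-|x| / b))

theorem laplaceMeasure_eq_withDensity (b : ℝ) :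
    laplaceMeasure b = volume.withDensity (laplacePDF b) := rfl

theorem measurable_laplacePDF (b : ℝ) : Measurable (laplacePDF b) := by
  unfold laplacePDF
  fun_prop

instance (b : ℝ) : SigmaFinite (volume.withDensity (laplacePDF b)) :=
  SigmaFinite.withDensity_ofReal _

theorem laplacePDF_le_exp_mul {b : ℝ} (hb : 0 < b) (x y : ℝ) :
    laplacePDF b x ≤ ENNReal.ofReal (Real.exp (|x - y| / b)) * laplacePDF b y := by
  rw [laplacePDF, laplacePDF, ← ENNReal.ofReal_mul (Real.exp_nonneg _)]
  refine ENNReal.ofReal_le_ofReal ?_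
  have htri : -|x| / b ≤ |x - y| / b + -|y| / b := by
    rw [← add_div]
    gcongr
    linarith [abs_sub_abs_le_abs_sub y x, abs_sub_comm x y]
  calc 1 / (2 * b) * Real.exp (-|x| / b)
      ≤ 1 / (2 * b) * Real.exp (|x - y| / b + -|y| / b) := by gcongr
    _ = Real.exp (|x - y| / b) * (1 / (2 * b) * Real.exp (-|y| / b)) := by
      rw [Real.exp_add]; ring

theorem prod_laplacePDF_le_exp_mul {ι : Type*} [Fintype ι] {b : ℝ} (hb : 0 < b) (x y : ι → ℝ) :
    ∏ i, laplacePDF b (x i) ≤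
      ENNReal.ofReal (Real.exp ((∑ i, |x i - y i|) / b)) * ∏ i, laplacePDF b (y i) := by
  calc ∏ i, laplacePDF b (x i)
      ≤ ∏ i, ENNReal.ofReal (Real.exp (|x i - y i| / b)) * laplacePDF b (y i) :=
        prod_le_prod' fun i _ => laplacePDF_le_exp_mul hb (x i) (y i)
    _ = _ := by
      rw [prod_mul_distrib, ← ENNReal.ofReal_prod_of_nonneg fun i _ => Real.exp_nonneg _,
        ← Real.exp_sum, sum_div]

theorem map_add_pi_laplaceMeasure {ι : Type*} [Fintype ι] (b : ℝ) (a : ι → ℝ) :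
    (Measure.pi fun _ : ι => laplaceMeasure b).map (a + ·) =
      volume.withDensity fun y => ∏ i, laplacePDF b (y i - a i) := by
  simp_rw [laplaceMeasure_eq_withDensity]
  rw [Measure.pi_withDensity _ fun _ => measurable_laplacePDF b, ← volume_pi,
    Measure.map_add_left_withDensity]
  simp only [neg_add_eq_sub, Pi.sub_apply]

theorem map_add_pi_laplaceMeasure_le {ι : Type*} [Fintype ι] {b : ℝ} (hb : 0 < b)
    (a a' : ι → ℝ) :
    (Measure.pi fun _ : ι => laplaceMeasure b).map (a + ·) ≤
      ENNReal.ofReal (Real.exp ((∑ i, |a i - a' i|) / b)) •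
        (Measure.pi fun _ : ι => laplaceMeasure b).map (a' + ·) := by
  rw [map_add_pi_laplaceMeasure, map_add_pi_laplaceMeasure,
    ← withDensity_smul' _ _ ENNReal.ofReal_ne_top]
  refine withDensity_mono (ae_of_all _ fun y => ?_)
  simpa only [Pi.smul_apply, smul_eq_mul, Pi.sub_apply, sub_sub_sub_cancel_left,
    abs_sub_comm (a' _)] using
    prod_laplacePDF_le_exp_mul hb (y - a) (y - a')

/-- The Laplace mechanism M(X) = f(X) + (ℓ₁,…,ℓ_s), with i.i.d. centered Laplace noise of
scale Δ₁f/ε, is ε-differentially private. -/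
theorem stmt8 {n d s : ℕ} (f : (Fin n → Fin d → ℝ) → (Fin s → ℝ))
    (ε Δ : ℝ) (hε : 0 < ε) (hΔ : 0 < Δ)
    (hsens : ∀ X Xt, Neighboring X Xt → ∑ i, |f X i - f Xt i| ≤ Δ)
    (M : (Fin n → Fin d → ℝ) → Measure (Fin s → ℝ))
    (hM : ∀ X, M X = (Measure.pi fun _ : Fin s => laplaceMeasure (Δ / ε)).map
      (fun ℓ => f X + ℓ)) :
    ∀ X Xt, Neighboring X Xt → ∀ S : Set (Fin s → ℝ), MeasurableSet S →
      M X S ≤ ENNReal.ofReal (Real.exp ε) * M Xt S := by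
  intro X Xt hN S _
  have hb : 0 < Δ / ε := div_pos hΔ hε
  have hratio : (∑ i, |f X i - f Xt i|) / (Δ / ε) ≤ ε := by
    rw [div_le_iff₀ hb, mul_div_cancel₀ _ hε.ne']
    exact hsens X Xt hN
  calc M X S
      ≤ ENNReal.ofReal (Real.exp ((∑ i, |f X i - f Xt i|) / (Δ / ε))) * M Xt S := by
        rw [hM, hM]
        exact map_add_pi_laplaceMeasure_le hb (f X) (f Xt) S
    _ ≤ ENNReal.ofReal (Real.exp ε) * M Xt S := by gcongr
end
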